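/- arXiv:1812.00248 — 3 statements merged into one kernel-verified Lean document; each statement's English description precedes it below -/
import Mathlib

section
/- A complex-valued vertex potential φ minimizes the Neumann power functional P_ξ(φ) = Σ_{e ∈ E^0} |φ(e^+) - φ(e^-)|^2/(2 l_e) - Σ_{e ∈ E^∞} Re(ξ(e)·conj(φ(e^-))) if and only if the induced global current, defined by ξ̃(e) = (φ(e^+) - φ(e^-))/l_e on bounded edges and by ξ on legs, is balanced at every vertex: Σ_{e: v = e^-} ξ̃(e) = Σ_{e: v = e^+} ξ̃(e). -/
/-!
The power functional expands as `P (φ + δ) = P φ + Re ∑ᵥ c v · conj (δ v) + E δ`, where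
`c` is the net current flowing into each vertex and `E δ ≥ 0` is the Dirichlet energy of `δ`;
the linear term comes from summation by parts along the edges and legs. A function of this
shape (linear plus nonnegative quadratic) is minimized at `φ` exactly when its linear part
vanishes, and testing the linear part against `δ = c v · 𝟙_v` shows that this means `c = 0`.
-/

open Finset ComplexConjugate

theorem forall_le_iff_forall_eq_zero_of_add_eq {M : Type*} [AddCommGroup M] [Module ℝ M]
    (P L Q : M → ℝ) (x : M)
    (hL : ∀ (t : ℝ) δ, L (t • δ) = t * L δ)
    (hQ : ∀ (t : ℝ) δ, Q (t • δ) = t ^ 2 * Q δ)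
    (hQ_nonneg : ∀ δ, 0 ≤ Q δ) (hP : ∀ δ, P (x + δ) = P x + L δ + Q δ) :
    (∀ y, P x ≤ P y) ↔ ∀ δ, L δ = 0 := by
  constructor
  · intro hmin δ
    have hquad : ∀ t : ℝ, 0 ≤ Q δ * (t * t) + L δ * t + 0 := fun t => by
      have := hmin (x + t • δ)
      rw [hP, hL, hQ] at this
      linarith
    have := discrim_le_zero hquad
    rw [discrim] at this
    nlinarith [sq_nonneg (L δ)]
  · intro hL0 y
    have := hP (y - x)
    rw [add_sub_cancel, hL0] at this
    linarith [hQ_nonneg (y - x)]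

theorem Complex.forall_re_sum_mul_conj_eq_zero_iff {ι : Type*} [Fintype ι] [DecidableEq ι]
    (c : ι → ℂ) : (∀ δ : ι → ℂ, (∑ i, c i * conj (δ i)).re = 0) ↔ c = 0 := by
  refine ⟨fun h => funext fun i => ?_, fun h δ => by simp [h]⟩
  have := h (Pi.single i (c i))
  rw [Fintype.sum_eq_single i fun j hj => by simp [hj], Pi.single_eq_same, Complex.mul_conj,
    Complex.ofReal_re, Complex.normSq_eq_zero] at this
  exact this

theorem Complex.sq_norm_add_div (a b : ℂ) (r : ℝ) :
    ‖a + b‖ ^ 2 / (2 * r) =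
      ‖a‖ ^ 2 / (2 * r) + (a / r * conj b).re + ‖b‖ ^ 2 / (2 * r) := by
  rw [div_mul_eq_mul_div, Complex.div_ofReal_re, Complex.sq_norm, Complex.sq_norm,
    Complex.sq_norm, Complex.normSq_add]
  ring

theorem Finset.sum_sum_fiberwise_mul {ι κ R : Type*} [Fintype ι] [Fintype κ] [DecidableEq κ]
    [NonUnitalNonAssocSemiring R] (key : ι → κ) (g : ι → R) (h : κ → R) :
    ∑ j, (∑ i with key i = j, g i) * h j = ∑ i, g i * h (key i) := by
  rw [← Finset.sum_fiberwise univ key fun i => g i * h (key i)]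
  refine sum_congr rfl fun j _ => ?_
  rw [sum_mul]
  exact sum_congr rfl fun i hi => by rw [(mem_filter.1 hi).2]

section NeumannPower

variable {V E₀ Einf : Type*} [Fintype E₀] [Fintype Einf]
  (src tgt : E₀ → V) (l : E₀ → ℝ) (ep : Einf → V) (ξ : Einf → ℂ)

noncomputable def dirichletEnergy (δ : V → ℂ) : ℝ :=
  ∑ e, ‖δ (tgt e) - δ (src e)‖ ^ 2 / (2 * l e)

noncomputable def neumannPower (φ : V → ℂ) : ℝ :=
  dirichletEnergy src tgt l φ - ∑ e, (ξ e * conj (φ (ep e))).re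

noncomputable def edgeCurrent (φ : V → ℂ) (e : E₀) : ℂ :=
  (φ (tgt e) - φ (src e)) / l e

theorem dirichletEnergy_nonneg (hl : ∀ e, 0 < l e) (δ : V → ℂ) :
    0 ≤ dirichletEnergy src tgt l δ :=
  sum_nonneg fun e _ => div_nonneg (sq_nonneg _) (by linarith [hl e])

theorem dirichletEnergy_smul (t : ℝ) (δ : V → ℂ) :
    dirichletEnergy src tgt l (t • δ) = t ^ 2 * dirichletEnergy src tgt l δ := by
  simp only [dirichletEnergy, mul_sum, Pi.smul_apply, ← smul_sub, norm_smul, mul_pow,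
    Real.norm_eq_abs, sq_abs, mul_div_assoc]

variable [Fintype V] [DecidableEq V]

/-- Legs start at their vertex, so their currents flow out of it. -/
noncomputable def netInflow (φ : V → ℂ) (v : V) : ℂ :=
  (∑ e with tgt e = v, edgeCurrent src tgt l φ e)
    - (∑ e with src e = v, edgeCurrent src tgt l φ e) - ∑ e with ep e = v, ξ e

theorem sum_netInflow_mul_conj (φ δ : V → ℂ) :
    ∑ v, netInflow src tgt l ep ξ φ v * conj (δ v) =
      ∑ e, edgeCurrent src tgt l φ e * conj (δ (tgt e) - δ (src e))
        - ∑ e, ξ e * conj (δ (ep e)) := by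
  simp only [netInflow, sub_mul, sum_sub_distrib, sum_sum_fiberwise_mul, map_sub, mul_sub]

theorem neumannPower_add (φ δ : V → ℂ) :
    neumannPower src tgt l ep ξ (φ + δ) =
      neumannPower src tgt l ep ξ φ + (∑ v, netInflow src tgt l ep ξ φ v * conj (δ v)).re
        + dirichletEnergy src tgt l δ := by
  simp only [neumannPower, dirichletEnergy, sum_netInflow_mul_conj, Pi.add_apply,
    add_sub_add_comm, Complex.sq_norm_add_div, map_add, mul_add, Complex.add_re,
    sum_add_distrib, Complex.sub_re, Complex.re_sum, edgeCurrent]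
  ring

theorem re_sum_netInflow_mul_conj_smul (φ : V → ℂ) (t : ℝ) (δ : V → ℂ) :
    (∑ v, netInflow src tgt l ep ξ φ v * conj ((t • δ) v)).re =
      t * (∑ v, netInflow src tgt l ep ξ φ v * conj (δ v)).re := by
  simp only [Pi.smul_apply, Complex.real_smul, map_mul, Complex.conj_ofReal,
    mul_left_comm _ (t : ℂ), ← mul_sum, Complex.re_ofReal_mul]

theorem forall_neumannPower_le_iff_netInflow_eq_zero (hl : ∀ e, 0 < l e) (φ : V → ℂ) :
    (∀ ψ, neumannPower src tgt l ep ξ φ ≤ neumannPower src tgt l ep ξ ψ) ↔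
      netInflow src tgt l ep ξ φ = 0 := by
  rw [forall_le_iff_forall_eq_zero_of_add_eq _ _ _ φ
    (re_sum_netInflow_mul_conj_smul src tgt l ep ξ φ) (dirichletEnergy_smul src tgt l)
    (dirichletEnergy_nonneg src tgt l hl)
    (neumannPower_add src tgt l ep ξ φ)]
  exact Complex.forall_re_sum_mul_conj_eq_zero_iff _

end NeumannPower

/-- A potential `φ` minimizes the Neumann power functional iff the induced global current
is balanced at every vertex. -/
theorem neumann_minimizer_iff_balanced
    {V E₀ Einf : Type*} [Fintype V] [Fintype E₀] [Fintype Einf] [DecidableEq V]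
    (src tgt : E₀ → V) (l : E₀ → ℝ) (hl : ∀ e, 0 < l e)
    (ep : Einf → V) (ξ : Einf → ℂ)
    (P : (V → ℂ) → ℝ)
    (hP : ∀ φ, P φ =
      (∑ e, ‖φ (tgt e) - φ (src e)‖ ^ 2 / (2 * l e)) -
        ∑ e, (ξ e * (starRingEnd ℂ) (φ (ep e))).re)
    (φ : V → ℂ) :
    (∀ ψ, P φ ≤ P ψ) ↔
      (∀ v : V,
        (∑ e ∈ Finset.univ.filter (fun e => src e = v),
            (φ (tgt e) - φ (src e)) / (l e : ℂ)) +
          ∑ e ∈ Finset.univ.filter (fun e => ep e = v), ξ e =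
        ∑ e ∈ Finset.univ.filter (fun e => tgt e = v),
            (φ (tgt e) - φ (src e)) / (l e : ℂ)) := by
  obtain rfl : P = neumannPower src tgt l ep ξ := funext hP
  rw [forall_neumannPower_le_iff_netInflow_eq_zero src tgt l ep ξ hl, funext_iff]
  refine forall_congr' fun v => ?_
  rw [Pi.zero_apply, netInflow, sub_sub, sub_eq_zero]
  exact eq_comm
end

section
/- Let A be an abelian group equipped with an antisymmetric biadditive real-valued pairing α × β, and let ℏ be such that sin(πℏ/2) ≠ 0. Then the bracket [L_α, L_β] = [α×β]_ℏ · L_{α+β} on the free complex vector space with basis {L_α}_{α∈A} is antisymmetric and satisfies the Jacobi identity, hence defines a Lie algebra structure. -/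
/-!
The bracket is biadditive, so both identities reduce to basis vectors, where they become identities
between the structure constants `c α β = [α×β]_ℏ`. Antisymmetry is oddness of `sin`. For Jacobi,
biadditivity of the pairing gives `(α+β)×γ = y - z` with `x = α×β`, `y = β×γ`, `z = γ×α`, and the
three terms add up to `sin X sin (Y - Z) + sin Y sin (Z - X) + sin Z sin (X - Y) = 0`, up to the
common factor `sin (πℏ/2)⁻²`.
-/

open Finsupp

theorem Complex.sin_mul_sin_sub_add_cyclic (x y z : ℂ) :
    sin x * sin (y - z) + sin y * sin (z - x) + sin z * sin (x - y) = 0 := by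
  simp only [sin_sub]
  ring

noncomputable def qNumber (ℏ : ℂ) (x : ℝ) : ℂ :=
  Complex.sin (Real.pi * ℏ * x / 2) / Complex.sin (Real.pi * ℏ / 2)

theorem qNumber_neg (ℏ : ℂ) (x : ℝ) : qNumber ℏ (-x) = -qNumber ℏ x := by
  simp only [qNumber, Complex.ofReal_neg, mul_neg, neg_div, Complex.sin_neg]

theorem qNumber_mul_qNumber_sub_add_cyclic (ℏ : ℂ) (x y z : ℝ) :
    qNumber ℏ x * qNumber ℏ (y - z) + qNumber ℏ y * qNumber ℏ (z - x)
      + qNumber ℏ z * qNumber ℏ (x - y) = 0 := by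
  have h := Complex.sin_mul_sin_sub_add_cyclic
    (Real.pi * ℏ * x / 2) (Real.pi * ℏ * y / 2) (Real.pi * ℏ * z / 2)
  simp only [qNumber, div_mul_div_comm, ← add_div, Complex.ofReal_sub, mul_sub, sub_div, h,
    zero_div]

noncomputable section TwistedBracket

variable {A R : Type*} [AddCommMonoid A] [CommRing R] (c : A → A → R)

/-- The bilinear extension of `[L_α, L_β] = c α β • L_{α+β}` to `A →₀ R`. -/
def twistedBracket (f g : A →₀ R) : A →₀ R :=
  f.sum fun α a => g.sum fun β b => (a * b * c α β) • single (α + β) 1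

@[simp]
theorem twistedBracket_zero_left (g : A →₀ R) : twistedBracket c 0 g = 0 :=
  sum_zero_index

@[simp]
theorem twistedBracket_zero_right (f : A →₀ R) : twistedBracket c f 0 = 0 := by
  simp [twistedBracket]

theorem twistedBracket_add_left (f₁ f₂ g : A →₀ R) :
    twistedBracket c (f₁ + f₂) g = twistedBracket c f₁ g + twistedBracket c f₂ g :=
  sum_add_index' (fun _ => by simp) fun _ _ _ => by
    simp only [← sum_add, add_mul, add_smul]

theorem twistedBracket_add_right (f g₁ g₂ : A →₀ R) :
    twistedBracket c f (g₁ + g₂) = twistedBracket c f g₁ + twistedBracket c f g₂ := by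
  simp only [twistedBracket, ← sum_add]
  exact sum_congr fun _ _ => sum_add_index' (fun _ => by simp) fun _ _ _ => by
    simp only [mul_add, add_mul, add_smul]

theorem twistedBracket_single_single (α β : A) (a b : R) :
    twistedBracket c (single α a) (single β b) = single (α + β) (a * b * c α β) := by
  simp [twistedBracket, sum_single_index, smul_single]

theorem twistedBracket_antisymm (hc : ∀ α β, c β α = -c α β) (f g : A →₀ R) :
    twistedBracket c f g = -twistedBracket c g f := by
  induction f using Finsupp.induction_linear with
  | zero => simp
  | add f₁ f₂ h₁ h₂ => rw [twistedBracket_add_left, h₁, h₂, twistedBracket_add_right, neg_add]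
  | single α a =>
    induction g using Finsupp.induction_linear with
    | zero => simp
    | add g₁ g₂ h₁ h₂ => rw [twistedBracket_add_right, h₁, h₂, twistedBracket_add_left, neg_add]
    | single β b =>
      rw [twistedBracket_single_single, twistedBracket_single_single, hc, add_comm β, ← single_neg]
      ring_nf

def jacobiator (f g k : A →₀ R) : A →₀ R :=
  twistedBracket c (twistedBracket c f g) k + twistedBracket c (twistedBracket c g k) f
    + twistedBracket c (twistedBracket c k f) g

theorem jacobiator_rotate (f g k : A →₀ R) : jacobiator c f g k = jacobiator c g k f := by
  simp only [jacobiator]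
  abel

@[simp]
theorem jacobiator_zero_left (g k : A →₀ R) : jacobiator c 0 g k = 0 := by
  simp [jacobiator]

theorem jacobiator_add_left (f₁ f₂ g k : A →₀ R) :
    jacobiator c (f₁ + f₂) g k = jacobiator c f₁ g k + jacobiator c f₂ g k := by
  simp only [jacobiator, twistedBracket_add_left, twistedBracket_add_right]
  abel

theorem jacobiator_single_single_single (α β γ : A) (a b d : R) :
    jacobiator c (single α a) (single β b) (single γ d) =
      single (α + β + γ) (a * b * d *
        (c α β * c (α + β) γ + c β γ * c (β + γ) α + c γ α * c (γ + α) β)) := by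
  have hβγα : β + γ + α = α + β + γ := by abel
  have hγαβ : γ + α + β = α + β + γ := by abel
  simp only [jacobiator, twistedBracket_single_single, hβγα, hγαβ, ← single_add]
  ring_nf

theorem jacobiator_eq_zero
    (hc : ∀ α β γ, c α β * c (α + β) γ + c β γ * c (β + γ) α + c γ α * c (γ + α) β = 0)
    (f g k : A →₀ R) : jacobiator c f g k = 0 := by
  induction f using Finsupp.induction_linear generalizing g k with
  | zero => simp
  | add f₁ f₂ h₁ h₂ => rw [jacobiator_add_left, h₁, h₂, add_zero]
  | single α a =>
    rw [jacobiator_rotate]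
    induction g using Finsupp.induction_linear generalizing k with
    | zero => simp
    | add g₁ g₂ h₁ h₂ => rw [jacobiator_add_left, h₁, h₂, add_zero]
    | single β b =>
      rw [jacobiator_rotate]
      induction k using Finsupp.induction_linear with
      | zero => simp
      | add k₁ k₂ h₁ h₂ => rw [jacobiator_add_left, h₁, h₂, add_zero]
      | single γ d =>
        rw [← jacobiator_rotate, ← jacobiator_rotate, jacobiator_single_single_single, hc,
          mul_zero, single_zero]

end TwistedBracket

open Finsupp in
theorem quantum_torus_bracket_lie_general
    {A : Type*} [AddCommGroup A]
    (ω : A → A → ℝ)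
    (hanti : ∀ α β, ω β α = -ω α β)
    (haddl : ∀ α β γ, ω (α + β) γ = ω α γ + ω β γ)
    (ℏ : ℂ)
    (q : ℝ → ℂ)
    (hq : ∀ x : ℝ, q x = Complex.sin (Real.pi * ℏ * x / 2) / Complex.sin (Real.pi * ℏ / 2))
    (br : (A →₀ ℂ) → (A →₀ ℂ) → (A →₀ ℂ))
    (hbr : ∀ f g, br f g =
      f.sum fun α a => g.sum fun β b => (a * b * q (ω α β)) • Finsupp.single (α + β) (1 : ℂ)) :
    (∀ f g, br f g = -br g f) ∧
      (∀ f g k, br (br f g) k + br (br g k) f + br (br k f) g = 0) := by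
  obtain rfl : q = qNumber ℏ := funext hq
  obtain rfl : br = twistedBracket fun α β => qNumber ℏ (ω α β) := funext₂ hbr
  refine ⟨twistedBracket_antisymm _ fun α β => by rw [hanti, qNumber_neg],
    jacobiator_eq_zero _ fun α β γ => ?_⟩
  rw [haddl, haddl, haddl, hanti γ α, hanti α β, hanti β γ]
  simpa only [neg_add_eq_sub] using
    qNumber_mul_qNumber_sub_add_cyclic ℏ (ω α β) (ω β γ) (ω γ α)

open Finsupp in
/-- The quantum-tori bracket `[L_α, L_β] = [α×β]_ℏ · L_{α+β}` on the free complex vector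
space with basis `{L_α}_{α ∈ A}` is antisymmetric and satisfies the Jacobi identity. -/
theorem quantum_torus_bracket_lie
    {A : Type*} [AddCommGroup A] [DecidableEq A]
    (ω : A → A → ℝ)
    (hanti : ∀ α β, ω β α = -ω α β)
    (haddl : ∀ α β γ, ω (α + β) γ = ω α γ + ω β γ)
    (haddr : ∀ α β γ, ω α (β + γ) = ω α β + ω α γ)
    (ℏ : ℂ) (h : Complex.sin (Real.pi * ℏ / 2) ≠ 0)
    (q : ℝ → ℂ)
    (hq : ∀ x : ℝ, q x = Complex.sin (Real.pi * ℏ * x / 2) / Complex.sin (Real.pi * ℏ / 2))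
    (br : (A →₀ ℂ) → (A →₀ ℂ) → (A →₀ ℂ))
    (hbr : ∀ f g, br f g =
      f.sum fun α a => g.sum fun β b => (a * b * q (ω α β)) • Finsupp.single (α + β) (1 : ℂ)) :
    (∀ f g, br f g = -br g f) ∧
      (∀ f g k, br (br f g) k + br (br g k) f + br (br k f) g = 0) :=
  quantum_torus_bracket_lie_general ω hanti haddl ℏ q hq br hbr
end

section
/- Let A, B be compact convex sets in ℝ^2 and define the mixed area Area(A,B) = (Area(A ⊞ B) - Area(A) - Area(B))/2, where A ⊞ B = {a + b : a ∈ A, b ∈ B} is the Minkowski sum. Then Area(A,B) ≥ (Area(A)·Area(B))^{1/2} (Minkowski's first inequality in the plane). -/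
/-!
Brunn–Minkowski in the plane, by slicing. For compact convex `K` let `f_K x` be the length of
the vertical section of `K` over `x`. Sections of convex sets are intervals, and for intervals
one-dimensional Brunn–Minkowski is an equality; hence `f_K` is concave on its support, its strict
superlevel sets are intervals, and `{f_A > s} + {f_B > t} ⊆ {f_{A+B} > s + t}`.

Let `M`, `N` be the suprema of `f_A`, `f_B`. For `0 < u < 1` the sets `{f_A > M u}` and
`{f_B > N u}` are nonempty intervals, so `|{f_A > M u}| + |{f_B > N u}| ≤ |{f_{A+B} > (M + N) u}|`.
Integrating in `u` with the layer-cake formula gives `|A| / M + |B| / N ≤ |A + B| / (M + N)`, and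
Cauchy–Schwarz turns this into `√|A| + √|B| ≤ √|A + B|`; squaring gives the mixed-area inequality.
-/

open MeasureTheory Set Pointwise Bornology

namespace Real

theorem volume_eq_ofReal_sSup_sub_sInf {s : Set ℝ} (hs : s.OrdConnected) (hne : s.Nonempty)
    (hb : IsBounded s) : volume s = ENNReal.ofReal (sSup s - sInf s) := by
  refine le_antisymm ((volume_le_diam s).trans_eq (ediam_eq hb)) ?_
  rw [← volume_Ioo]
  refine measure_mono fun x hx => ?_
  obtain ⟨a, has, hax⟩ := exists_lt_of_csInf_lt hne hx.1
  obtain ⟨b, hbs, hxb⟩ := exists_lt_of_lt_csSup hne hx.2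
  exact hs.out has hbs ⟨hax.le, hxb.le⟩

theorem volume_add_of_convex {s t : Set ℝ} (hs : Convex ℝ s) (ht : Convex ℝ t)
    (hsne : s.Nonempty) (htne : t.Nonempty) (hsb : IsBounded s) (htb : IsBounded t) :
    volume (s + t) = volume s + volume t := by
  rw [volume_eq_ofReal_sSup_sub_sInf hs.ordConnected hsne hsb,
    volume_eq_ofReal_sSup_sub_sInf ht.ordConnected htne htb,
    volume_eq_ofReal_sSup_sub_sInf (hs.add ht).ordConnected (hsne.add htne) (hsb.add htb),
    csSup_add hsne hsb.bddAbove htne htb.bddAbove, csInf_add hsne hsb.bddBelow htne htb.bddBelow,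
    ← ENNReal.ofReal_add (sub_nonneg.2 (csInf_le_csSup hsne hsb.bddBelow hsb.bddAbove))
      (sub_nonneg.2 (csInf_le_csSup htne htb.bddBelow htb.bddAbove))]
  ring_nf

theorem toReal_volume_add_le_of_add_subset {s t u : Set ℝ} (hs : Convex ℝ s) (ht : Convex ℝ t)
    (hsne : s.Nonempty) (htne : t.Nonempty) (hsb : IsBounded s) (htb : IsBounded t)
    (hu : IsBounded u) (hsub : s + t ⊆ u) :
    (volume s).toReal + (volume t).toReal ≤ (volume u).toReal := by
  rw [← ENNReal.toReal_add hsb.measure_lt_top.ne htb.measure_lt_top.ne,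
    ← volume_add_of_convex hs ht hsne htne hsb htb]
  exact ENNReal.toReal_mono hu.measure_lt_top.ne (measure_mono hsub)

end Real

theorem measure_le_measure_add_left {G : Type*} [AddGroup G] [MeasurableSpace G]
    {μ : Measure G} [μ.IsAddLeftInvariant] {s t : Set G} (hs : s.Nonempty) :
    μ t ≤ μ (s + t) := by
  obtain ⟨a, ha⟩ := hs
  rw [← measure_vadd μ a t]
  exact measure_mono (vadd_set_subset_add ha)

noncomputable def sliceLength (K : Set (ℝ × ℝ)) (x : ℝ) : ℝ :=
  (volume (Prod.mk x ⁻¹' K)).toReal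

section sliceLength

variable {K A B : Set (ℝ × ℝ)}

theorem Convex.preimage_prodMk (hK : Convex ℝ K) (x : ℝ) : Convex ℝ (Prod.mk x ⁻¹' K) :=
  hK.affine_preimage ((AffineMap.const ℝ ℝ x).prod (AffineMap.id ℝ ℝ))

theorem Bornology.IsBounded.preimage_prodMk (hK : IsBounded K) (x : ℝ) :
    IsBounded (Prod.mk x ⁻¹' K) :=
  hK.image_snd.subset fun y hy => ⟨(x, y), hy, rfl⟩

theorem sliceLength_nonneg (K : Set (ℝ × ℝ)) (x : ℝ) : 0 ≤ sliceLength K x :=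
  ENNReal.toReal_nonneg

theorem nonempty_of_sliceLength_pos {x : ℝ} (h : 0 < sliceLength K x) :
    (Prod.mk x ⁻¹' K).Nonempty :=
  nonempty_iff_ne_empty.2 fun he => by simp [sliceLength, he] at h

theorem measurable_sliceLength (hK : MeasurableSet K) : Measurable (sliceLength K) :=
  (measurable_measure_prodMk_left hK).ennreal_toReal

theorem lintegral_sliceLength (hK : MeasurableSet K) (hb : IsBounded K) :
    ∫⁻ x, ENNReal.ofReal (sliceLength K x) = volume K := by
  rw [Measure.volume_eq_prod, Measure.prod_apply hK]
  exact lintegral_congr fun x => ENNReal.ofReal_toReal (hb.preimage_prodMk x).measure_lt_top.ne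

theorem bddAbove_range_sliceLength (hb : IsBounded K) : BddAbove (range (sliceLength K)) := by
  refine ⟨(volume (Prod.snd '' K)).toReal, ?_⟩
  rintro _ ⟨x, rfl⟩
  exact ENNReal.toReal_mono hb.image_snd.measure_lt_top.ne
    (measure_mono fun y hy => ⟨(x, y), hy, rfl⟩)

theorem exists_pos_isLUB_range_sliceLength (hK : MeasurableSet K) (hb : IsBounded K)
    (h : volume K ≠ 0) : ∃ M, 0 < M ∧ IsLUB (range (sliceLength K)) M := by
  obtain ⟨x, hx⟩ : ∃ x, 0 < sliceLength K x := by
    by_contra! hle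
    refine h ?_
    rw [← lintegral_sliceLength hK hb]
    simp [ENNReal.ofReal_eq_zero.2 (hle _)]
  have hlub := isLUB_csSup (range_nonempty _) (bddAbove_range_sliceLength hb)
  exact ⟨_, hx.trans_le (hlub.1 ⟨x, rfl⟩), hlub⟩

theorem concaveOn_sliceLength (hb : IsBounded K) (hKc : Convex ℝ K) :
    ConcaveOn ℝ (Prod.fst '' K) (sliceLength K) := by
  refine ⟨hKc.linear_image (LinearMap.fst ℝ ℝ ℝ), ?_⟩
  rintro _ ⟨⟨x, y⟩, hxy, rfl⟩ _ ⟨⟨x', y'⟩, hxy', rfl⟩ p q hp hq hpq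
  have hsub :
      p • (Prod.mk x ⁻¹' K) + q • (Prod.mk x' ⁻¹' K) ⊆ Prod.mk (p * x + q * x') ⁻¹' K := by
    rintro _ ⟨_, ⟨a, ha, rfl⟩, _, ⟨b, hb, rfl⟩, rfl⟩
    simpa using hKc ha hb hp hq hpq
  calc p • sliceLength K x + q • sliceLength K x'
      = (volume (p • Prod.mk x ⁻¹' K)).toReal
          + (volume (q • Prod.mk x' ⁻¹' K)).toReal := by
        simp [sliceLength, Measure.addHaar_smul, abs_of_nonneg, hp, hq]
    _ ≤ sliceLength K (p • x + q • x') :=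
        Real.toReal_volume_add_le_of_add_subset ((hKc.preimage_prodMk x).smul p)
          ((hKc.preimage_prodMk x').smul q) (Nonempty.smul_set ⟨y, hxy⟩)
          (Nonempty.smul_set ⟨y', hxy'⟩)
          ((hb.preimage_prodMk x).smul₀ p) ((hb.preimage_prodMk x').smul₀ q)
          (hb.preimage_prodMk _) hsub

theorem convex_setOf_lt_sliceLength (hb : IsBounded K) (hKc : Convex ℝ K) {t : ℝ}
    (ht : 0 ≤ t) : Convex ℝ {x | t < sliceLength K x} := by
  have hset :
      {x | t < sliceLength K x} = {x | x ∈ Prod.fst '' K ∧ t < sliceLength K x} := by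
    ext x
    refine ⟨fun hx => ⟨?_, hx⟩, And.right⟩
    obtain ⟨y, hy⟩ := nonempty_of_sliceLength_pos (ht.trans_lt hx)
    exact ⟨(x, y), hy, rfl⟩
  rw [hset]
  exact (concaveOn_sliceLength hb hKc).convex_gt t

theorem isBounded_setOf_lt_sliceLength (hb : IsBounded K) {t : ℝ} (ht : 0 ≤ t) :
    IsBounded {x | t < sliceLength K x} := by
  refine hb.image_fst.subset fun x hx => ?_
  obtain ⟨y, hy⟩ := nonempty_of_sliceLength_pos (ht.trans_lt hx)
  exact ⟨(x, y), hy, rfl⟩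

theorem sliceLength_add_le_sliceLength_add (hA : IsBounded A) (hB : IsBounded B)
    (hAc : Convex ℝ A) (hBc : Convex ℝ B) {x y : ℝ} (hx : (Prod.mk x ⁻¹' A).Nonempty)
    (hy : (Prod.mk y ⁻¹' B).Nonempty) :
    sliceLength A x + sliceLength B y ≤ sliceLength (A + B) (x + y) := by
  refine Real.toReal_volume_add_le_of_add_subset (hAc.preimage_prodMk x) (hBc.preimage_prodMk y)
    hx hy (hA.preimage_prodMk x) (hB.preimage_prodMk y) ((hA.add hB).preimage_prodMk _) ?_
  rintro _ ⟨a, ha, b, hb, rfl⟩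
  exact ⟨(x, a), ha, (y, b), hb, rfl⟩

theorem volume_setOf_lt_sliceLength_add_le (hA : IsBounded A) (hB : IsBounded B)
    (hAc : Convex ℝ A) (hBc : Convex ℝ B) {s t : ℝ} (hs : 0 ≤ s) (ht : 0 ≤ t)
    (hsne : ∃ x, s < sliceLength A x) (htne : ∃ y, t < sliceLength B y) :
    volume {x | s < sliceLength A x} + volume {y | t < sliceLength B y} ≤
      volume {z | s + t < sliceLength (A + B) z} := by
  rw [← Real.volume_add_of_convex (convex_setOf_lt_sliceLength hA hAc hs)
    (convex_setOf_lt_sliceLength hB hBc ht) hsne htne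
    (isBounded_setOf_lt_sliceLength hA hs) (isBounded_setOf_lt_sliceLength hB ht)]
  refine measure_mono ?_
  rintro _ ⟨x, hx, y, hy, rfl⟩
  exact (add_lt_add hx hy).trans_le (sliceLength_add_le_sliceLength_add hA hB hAc hBc
    (nonempty_of_sliceLength_pos (hs.trans_lt hx))
    (nonempty_of_sliceLength_pos (ht.trans_lt hy)))

end sliceLength

section LayerCake

variable {α : Type*} [MeasurableSpace α] {μ : Measure α}

theorem setLIntegral_Ioi_measure_mul_lt_eq {f : α → ℝ} {c : ℝ} (hc : 0 < c) (hf : 0 ≤ f)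
    (hfm : Measurable f) :
    ∫⁻ u in Ioi 0, μ {x | c * u < f x} =
      ENNReal.ofReal c⁻¹ * ∫⁻ x, ENNReal.ofReal (f x) ∂μ := by
  have hcake := lintegral_eq_lintegral_meas_lt μ (Filter.Eventually.of_forall fun x =>
    div_nonneg (hf x) hc.le) (hfm.div_const c).aemeasurable
  simp_rw [lt_div_iff₀ hc, mul_comm _ c] at hcake
  rw [← hcake, ← lintegral_const_mul' _ _ ENNReal.ofReal_ne_top]
  refine lintegral_congr fun x => ?_
  rw [← ENNReal.ofReal_mul (inv_nonneg.2 hc.le), inv_mul_eq_div]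

theorem inv_mul_lintegral_add_inv_mul_lintegral_le {f g h : α → ℝ} {M N : ℝ}
    (hf : 0 ≤ f) (hg : 0 ≤ g) (hh : 0 ≤ h)
    (hfm : Measurable f) (hgm : Measurable g) (hhm : Measurable h)
    (hM : IsLUB (range f) M) (hN : IsLUB (range g) N) (hM0 : 0 < M) (hN0 : 0 < N)
    (hlevel : ∀ s t, 0 < s → 0 < t → (∃ x, s < f x) → (∃ y, t < g y) →
      μ {x | s < f x} + μ {y | t < g y} ≤ μ {z | s + t < h z}) :
    ENNReal.ofReal M⁻¹ * ∫⁻ x, ENNReal.ofReal (f x) ∂μ +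
        ENNReal.ofReal N⁻¹ * ∫⁻ x, ENNReal.ofReal (g x) ∂μ ≤
      ENNReal.ofReal (M + N)⁻¹ * ∫⁻ x, ENNReal.ofReal (h x) ∂μ := by
  have hanti : ∀ (c : ℝ) (F : α → ℝ), 0 ≤ c → Antitone fun u => μ {x | c * u < F x} :=
    fun c F hc u v huv => measure_mono fun x hx =>
      (mul_le_mul_of_nonneg_left huv hc).trans_lt hx
  rw [← setLIntegral_Ioi_measure_mul_lt_eq hM0 hf hfm,
    ← setLIntegral_Ioi_measure_mul_lt_eq hN0 hg hgm,
    ← setLIntegral_Ioi_measure_mul_lt_eq (add_pos hM0 hN0) hh hhm,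
    ← lintegral_add_left (hanti M f hM0.le).measurable]
  refine setLIntegral_mono (hanti _ h (add_pos hM0 hN0).le).measurable fun u hu => ?_
  -- For `u < 1` both superlevel sets are nonempty, for `u ≥ 1` both are empty.
  rcases lt_or_ge u 1 with hu1 | hu1
  · have hfne := (lt_isLUB_iff hM).1 (mul_lt_of_lt_one_right hM0 hu1)
    have hgne := (lt_isLUB_iff hN).1 (mul_lt_of_lt_one_right hN0 hu1)
    simpa only [add_mul] using hlevel (M * u) (N * u) (mul_pos hM0 hu) (mul_pos hN0 hu)
      (by simpa using hfne) (by simpa using hgne)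
  · have hfe : {x | M * u < f x} = ∅ := eq_empty_of_forall_notMem fun x hx =>
      (hx.trans_le (hM.1 ⟨x, rfl⟩)).not_ge (le_mul_of_one_le_right hM0.le hu1)
    have hge : {y | N * u < g y} = ∅ := eq_empty_of_forall_notMem fun y hy =>
      (hy.trans_le (hN.1 ⟨y, rfl⟩)).not_ge (le_mul_of_one_le_right hN0.le hu1)
    simp [hfe, hge]

end LayerCake

theorem sq_sqrt_add_sqrt_le_mul_div_add_div {a b M N : ℝ} (ha : 0 ≤ a) (hb : 0 ≤ b)
    (hM : 0 < M) (hN : 0 < N) : (√a + √b) ^ 2 ≤ (M + N) * (a / M + b / N) := by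
  obtain ⟨x, hx, rfl⟩ : ∃ x, 0 ≤ x ∧ x ^ 2 = a := ⟨√a, Real.sqrt_nonneg a, Real.sq_sqrt ha⟩
  obtain ⟨y, hy, rfl⟩ : ∃ y, 0 ≤ y ∧ y ^ 2 = b := ⟨√b, Real.sqrt_nonneg b, Real.sq_sqrt hb⟩
  rw [Real.sqrt_sq hx, Real.sqrt_sq hy, div_add_div _ _ hM.ne' hN.ne', mul_div_assoc',
    le_div_iff₀ (by positivity)]
  nlinarith [sq_nonneg (x * N - y * M)]

theorem sqrt_volume_add_sqrt_volume_le {A B : Set (ℝ × ℝ)} (hA : IsCompact A) (hB : IsCompact B)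
    (hAc : Convex ℝ A) (hBc : Convex ℝ B) (hAne : A.Nonempty) (hBne : B.Nonempty) :
    √(volume A).toReal + √(volume B).toReal ≤ √(volume (A + B)).toReal := by
  have hAB := hA.add hB
  rcases eq_or_ne (volume A) 0 with hA0 | hA0
  · simpa [hA0] using Real.sqrt_le_sqrt
      (ENNReal.toReal_mono hAB.measure_lt_top.ne (measure_le_measure_add_left hAne))
  rcases eq_or_ne (volume B) 0 with hB0 | hB0
  · rw [add_comm A]
    simpa [hB0] using Real.sqrt_le_sqrt
      (ENNReal.toReal_mono (hB.add hA).measure_lt_top.ne (measure_le_measure_add_left hBne))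
  obtain ⟨M, hM0, hM⟩ := exists_pos_isLUB_range_sliceLength hA.measurableSet hA.isBounded hA0
  obtain ⟨N, hN0, hN⟩ := exists_pos_isLUB_range_sliceLength hB.measurableSet hB.isBounded hB0
  have key := inv_mul_lintegral_add_inv_mul_lintegral_le (μ := volume)
    (sliceLength_nonneg A) (sliceLength_nonneg B) (sliceLength_nonneg (A + B))
    (measurable_sliceLength hA.measurableSet) (measurable_sliceLength hB.measurableSet)
    (measurable_sliceLength hAB.measurableSet) hM hN hM0 hN0
    fun s t hs ht =>
      volume_setOf_lt_sliceLength_add_le hA.isBounded hB.isBounded hAc hBc hs.le ht.le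
  rw [lintegral_sliceLength hA.measurableSet hA.isBounded,
    lintegral_sliceLength hB.measurableSet hB.isBounded,
    lintegral_sliceLength hAB.measurableSet hAB.isBounded] at key
  have hreal :
      (volume A).toReal / M + (volume B).toReal / N ≤ (volume (A + B)).toReal / (M + N) := by
    have := ENNReal.toReal_mono
      (ENNReal.mul_ne_top ENNReal.ofReal_ne_top hAB.measure_lt_top.ne) key
    rwa [ENNReal.toReal_add (ENNReal.mul_ne_top ENNReal.ofReal_ne_top hA.measure_lt_top.ne)
      (ENNReal.mul_ne_top ENNReal.ofReal_ne_top hB.measure_lt_top.ne), ENNReal.toReal_mul,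
      ENNReal.toReal_mul, ENNReal.toReal_mul, ENNReal.toReal_ofReal (by positivity),
      ENNReal.toReal_ofReal (by positivity), ENNReal.toReal_ofReal (by positivity),
      inv_mul_eq_div, inv_mul_eq_div, inv_mul_eq_div] at this
  rw [Real.le_sqrt (by positivity) ENNReal.toReal_nonneg]
  calc (√(volume A).toReal + √(volume B).toReal) ^ 2
      ≤ (M + N) * ((volume A).toReal / M + (volume B).toReal / N) :=
        sq_sqrt_add_sqrt_le_mul_div_add_div ENNReal.toReal_nonneg ENNReal.toReal_nonneg hM0 hN0
    _ ≤ (volume (A + B)).toReal := by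
        rwa [le_div_iff₀ (add_pos hM0 hN0), mul_comm] at hreal

open MeasureTheory Pointwise in
/-- Minkowski's first inequality in the plane: for nonempty compact convex `A, B ⊆ ℝ²`,
the mixed area `(Area(A⊞B) - Area A - Area B)/2` is at least `√(Area A · Area B)`. -/
theorem minkowski_first_inequality_plane
    (A B : Set (ℝ × ℝ)) (hA : IsCompact A) (hB : IsCompact B)
    (hAc : Convex ℝ A) (hBc : Convex ℝ B)
    (hAne : A.Nonempty) (hBne : B.Nonempty) :
    Real.sqrt ((volume A).toReal * (volume B).toReal) ≤
      ((volume (A + B)).toReal - (volume A).toReal - (volume B).toReal) / 2 := by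
  have hsq := pow_le_pow_left₀ (by positivity)
    (sqrt_volume_add_sqrt_volume_le hA hB hAc hBc hAne hBne) 2
  rw [Real.sq_sqrt ENNReal.toReal_nonneg, add_sq, Real.sq_sqrt ENNReal.toReal_nonneg,
    Real.sq_sqrt ENNReal.toReal_nonneg] at hsq
  rw [Real.sqrt_mul ENNReal.toReal_nonneg]
  linarith
end
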